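/- In every planar geometric storyplan of the graph G, there is a time step at which all twelve cycle vertices are simultaneously visible. -/

import Mathlib

/-- The straight-line drawing `D` of the subgraph of `G` induced by the visible
vertex set `S` is planar. -/
def IsPlanarSLFrame {V : Type*} (G : SimpleGraph V) (S : Set V) (D : V → ℝ × ℝ) : Prop :=
  Set.InjOn D S ∧
  (∀ u v w, G.Adj u v → u ∈ S → v ∈ S → w ∈ S → w ≠ u → w ≠ v →
      D w ∉ openSegment ℝ (D u) (D v)) ∧
  (∀ u v x y, G.Adj u v → G.Adj x y → u ∈ S → v ∈ S → x ∈ S → y ∈ S →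
      ¬((u = x ∧ v = y) ∨ (u = y ∧ v = x)) →
      ∀ p ∈ segment ℝ (D u) (D v) ∩ segment ℝ (D x) (D y),
        ∃ z, (z = u ∨ z = v) ∧ (z = x ∨ z = y) ∧ p = D z)

/-- `(len, s, e, D)` is a planar geometric storyplan of `G`: `len ≥ 1` time steps,
each vertex `v` is visible on the nonempty interval `[s v, e v] ⊆ [1, len]`,
the endpoints of every edge co-occur, and every frame is a planar
straight-line drawing. -/
def IsGeomStoryplan {V : Type*} (G : SimpleGraph V)
    (len : ℕ) (s e : V → ℕ) (D : V → ℝ × ℝ) : Prop :=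
  1 ≤ len ∧
  (∀ v, 1 ≤ s v ∧ s v ≤ e v ∧ e v ≤ len) ∧
  (∀ u v, G.Adj u v → ∃ t, s u ≤ t ∧ t ≤ e u ∧ s v ≤ t ∧ t ≤ e v) ∧
  (∀ t, 1 ≤ t → t ≤ len → IsPlanarSLFrame G {v | s v ≤ t ∧ t ≤ e v} D)

/-- `G` admits a planar geometric storyplan. -/
def HasGeomStoryplan {V : Type*} (G : SimpleGraph V) : Prop :=
  ∃ len s e D, IsGeomStoryplan G len s e D

/-- The 28 vertices of the graph `G`: cycle vertices `a i`, `b i`, `c i`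
(`i ∈ Fin 4`), apex vertices `q i j` and edge vertices `r i j`
(`i ∈ Fin 4`, `j ∈ Fin 2`). -/
inductive GVert : Type
  | a : Fin 4 → GVert
  | b : Fin 4 → GVert
  | c : Fin 4 → GVert
  | q : Fin 4 → Fin 2 → GVert
  | r : Fin 4 → Fin 2 → GVert
  deriving DecidableEq

/-- Base relation generating the edges of `G`: the three 4-cycles
`A`, `B`, `C`; each apex vertex `q i j` adjacent to all twelve cycle vertices;
each edge vertex `r i j` adjacent to `q i j` and to the six cycle vertices
`a i, a (i+1), b i, b (i+1), c i, c (i+1)`. -/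
def GRel : GVert → GVert → Prop
  | .a i, .a k => k = i + 1
  | .b i, .b k => k = i + 1
  | .c i, .c k => k = i + 1
  | .q _ _, .a _ => True
  | .q _ _, .b _ => True
  | .q _ _, .c _ => True
  | .r i j, .q i' j' => i' = i ∧ j' = j
  | .r i _, .a k => k = i ∨ k = i + 1
  | .r i _, .b k => k = i ∨ k = i + 1
  | .r i _, .c k => k = i ∨ k = i + 1
  | _, _ => False

/-- The graph `G` from the paper (28 vertices). -/
def GraphG : SimpleGraph GVert := SimpleGraph.fromRel GRel

/-- Vertex `v` is visible at time `t`. -/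
def Visible (s e : GVert → ℕ) (t : ℕ) (v : GVert) : Prop :=
  s v ≤ t ∧ t ≤ e v

/-- All twelve cycle vertices are visible at time `t`. -/
def CyclesVisible (s e : GVert → ℕ) (t : ℕ) : Prop :=
  ∀ k : Fin 4, Visible s e t (.a k) ∧ Visible s e t (.b k) ∧ Visible s e t (.c k)

/-!
Let `u` be a cycle vertex whose interval ends first, at time `t`. If some cycle vertex `w` is
invisible at `t`, it appears only after `t`; each apex is adjacent to `u` and to `w`, so it is
visible at `t`, and so are the two cycle neighbours `n₁, n₂` of `u`. Hence the frame at `t`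
contains `u` joined to all vertices of a `K_{2,3}` with parts `{n₁, n₂}` and three apices.

This configuration has no planar straight-line drawing. An edge `n₁ p` spans, seen from `u`, an
angle `∠ n₁ u p < π`, and every neighbour of a vertex strictly inside that angle is inside it too,
since otherwise its edge would leave the triangle `u n₁ p` through a side. As `n₂` is adjacent to
all apices, an angle `∠ n₁ u p` containing one apex contains all of them. Two of the three apices
lie on the same side of the line `u n₁`, so the angle of one of them, `p`, contains another and
hence both. The other two again lie on one side, so one of their angles contains the other apex
and hence `p`; but two angles with the common side `u n₁` cannot each contain the other's second
side.
-/

lemma exists_ne_mul_pos {ι : Type*} [Fintype ι] {f : ι → ℝ} (hf : ∀ i, f i ≠ 0)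
    (hι : 2 < Fintype.card ι) : ∃ i j, i ≠ j ∧ 0 < f i * f j := by
  obtain ⟨i, j, hij, h⟩ :=
    Fintype.exists_ne_map_eq_of_card_lt (fun i => decide (0 < f i)) (by simpa using hι)
  simp only [decide_eq_decide] at h
  refine ⟨i, j, hij, ?_⟩
  rcases (hf i).lt_or_gt with hi | hi <;> rcases (hf j).lt_or_gt with hj | hj
  · exact mul_pos_of_neg_of_neg hi hj
  · linarith [h.2 hj]
  · linarith [h.1 hi]
  · exact mul_pos hi hj

lemma mem_openSegment_or_of_sameRay {E : Type*} [AddCommGroup E] [Module ℝ E] {u z z' : E}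
    (h : SameRay ℝ (z - u) (z' - u)) (hz : z ≠ u) (hz' : z' ≠ u) (hne : z ≠ z') :
    z ∈ openSegment ℝ u z' ∨ z' ∈ openSegment ℝ u z := by
  rcases wbtw_total_of_sameRay_vsub_left (R := ℝ) (x := u) (y := z) (z := z') h with h | h
  · exact Or.inl (mem_openSegment_of_ne_left_right hz.symm hne.symm h.mem_segment)
  · exact Or.inr (mem_openSegment_of_ne_left_right hz'.symm hne h.mem_segment)

lemma exists_mem_segment_inter_side {E : Type*} [AddCommGroup E] [Module ℝ E] {u v w : E}
    {a b c a' b' c' : ℝ}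
    (ha : 0 ≤ a) (hb : 0 ≤ b) (hc : 0 ≤ c) (habc : a + b + c = 1) (habc' : a' + b' + c' = 1)
    (hout : a' ≤ 0 ∨ b' ≤ 0 ∨ c' ≤ 0) :
    ∃ p ∈ segment ℝ (a • u + b • v + c • w) (a' • u + b' • v + c' • w),
      p ∈ segment ℝ v w ∨ p ∈ segment ℝ u w ∨ p ∈ segment ℝ u v := by
  set f : ℝ → ℝ := fun θ => min (min ((1 - θ) * a + θ * a') ((1 - θ) * b + θ * b'))
    ((1 - θ) * c + θ * c')
  have hf : ContinuousOn f (Set.Icc 0 1) := by fun_prop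
  have hf0 : 0 ≤ f 0 := by simp [f, ha, hb, hc]
  have hf1 : f 1 ≤ 0 := by simp only [f]; rcases hout with h | h | h <;> simp [h]
  obtain ⟨θ, ⟨hθ₀, hθ₁⟩, hθ⟩ := intermediate_value_Icc' zero_le_one hf ⟨hf1, hf0⟩
  set a'' := (1 - θ) * a + θ * a'
  set b'' := (1 - θ) * b + θ * b'
  set c'' := (1 - θ) * c + θ * c'
  have ha'' : 0 ≤ a'' := hθ ▸ (min_le_left _ _).trans (min_le_left _ _)
  have hb'' : 0 ≤ b'' := hθ ▸ (min_le_left _ _).trans (min_le_right _ _)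
  have hc'' : 0 ≤ c'' := hθ ▸ min_le_right _ _
  have hsum : a'' + b'' + c'' = 1 := by linear_combination (1 - θ) * habc + θ * habc'
  refine ⟨a'' • u + b'' • v + c'' • w, ⟨1 - θ, θ, by linarith, hθ₀, by ring, by module⟩, ?_⟩
  rcases min_choice (min a'' b'') c'' with h | h
  · rcases min_choice a'' b'' with h' | h'
    · have h0 : a'' = 0 := h' ▸ h ▸ hθ
      exact Or.inl ⟨b'', c'', hb'', hc'', by linarith, by simp [h0]⟩
    · have h0 : b'' = 0 := h' ▸ h ▸ hθ
      exact Or.inr (Or.inl ⟨a'', c'', ha'', hc'', by linarith, by simp [h0]⟩)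
  · have h0 : c'' = 0 := h ▸ hθ
    exact Or.inr (Or.inr ⟨a'', b'', ha'', hb'', by linarith, by simp [h0]⟩)

namespace Plane

def cross (p q : ℝ × ℝ) : ℝ := p.1 * q.2 - p.2 * q.1

lemma cross_swap (p q : ℝ × ℝ) : cross q p = -cross p q := by
  simp only [cross]; ring

@[simp] lemma cross_self (p : ℝ × ℝ) : cross p p = 0 := by
  simp only [cross]; ring

@[simp] lemma cross_zero_right (p : ℝ × ℝ) : cross p 0 = 0 := by simp [cross]

@[simp] lemma cross_smul_right (c : ℝ) (p q : ℝ × ℝ) : cross p (c • q) = c * cross p q := by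
  simp only [cross, Prod.smul_fst, Prod.smul_snd, smul_eq_mul]; ring

lemma exists_eq_smul_of_cross_eq_zero {p q : ℝ × ℝ} (h : cross p q = 0) (hp : p ≠ 0) :
    ∃ c : ℝ, q = c • p := by
  obtain ⟨x, y⟩ := p
  obtain ⟨x', y'⟩ := q
  simp only [cross] at h
  rcases eq_or_ne x 0 with rfl | hx
  · have hy : y ≠ 0 := fun hy => hp (by simp [hy])
    refine ⟨y' / y, Prod.ext ?_ ?_⟩
    · simpa [hy] using h
    · simp [hy]
  · refine ⟨x' / x, Prod.ext ?_ ?_⟩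
    · simp [hx]
    · simp only [Prod.smul_snd, smul_eq_mul]
      field_simp
      linarith

lemma eq_smul_add_smul_of_cross_ne_zero {p q : ℝ × ℝ} (h : cross p q ≠ 0) (r : ℝ × ℝ) :
    r = (cross r q / cross p q) • p + (cross p r / cross p q) • q := by
  refine Prod.ext ?_ ?_ <;>
  · simp only [Prod.fst_add, Prod.snd_add, Prod.smul_fst, Prod.smul_snd, smul_eq_mul]
    field_simp
    simp only [cross]
    ring

/-- `x` lies strictly inside the convex cone spanned by `a` and `b`, an angle of opening `< π`. -/
def InCone (a b x : ℝ × ℝ) : Prop := 0 < cross a x * cross a b ∧ 0 < cross x b * cross a b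

namespace InCone

variable {a b x : ℝ × ℝ}

lemma cross_ne_zero (h : InCone a b x) : cross a b ≠ 0 := by
  rintro h0
  simpa [h0] using h.1

lemma ne_zero (h : InCone a b x) : x ≠ 0 := by
  rintro rfl
  simpa using h.1

lemma ne_left (h : InCone a b x) : x ≠ a := by
  rintro rfl
  simpa using h.1

lemma ne_right (h : InCone a b x) : x ≠ b := by
  rintro rfl
  simpa using h.2

lemma not_inCone_swap (h : InCone a b x) : ¬ InCone a x b := by
  rintro ⟨h₁, h₂⟩
  rw [cross_swap] at h₂
  nlinarith [mul_pos h.1 h.2, mul_pos h₂ (sq_pos_of_ne_zero h.cross_ne_zero)]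

lemma exists_pos_smul_add (h : InCone a b x) :
    ∃ α β : ℝ, 0 < α ∧ 0 < β ∧ x = α • a + β • b := by
  refine ⟨_, _, ?_, ?_, eq_smul_add_smul_of_cross_ne_zero h.cross_ne_zero x⟩
  · rw [div_pos_iff, ← mul_pos_iff]; exact h.2
  · rw [div_pos_iff, ← mul_pos_iff]; exact h.1

end InCone

lemma inCone_or_inCone_of_mul_pos {a e f : ℝ × ℝ} (hef : 0 < cross a e * cross a f)
    (hne : ¬ SameRay ℝ e f) : InCone a f e ∨ InCone a e f := by
  have he : e ≠ 0 := by rintro rfl; simp at hef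
  have hcross : cross e f ≠ 0 := by
    intro h
    obtain ⟨c, rfl⟩ := exists_eq_smul_of_cross_eq_zero h he
    rw [cross_smul_right] at hef
    have hc : 0 < c := by nlinarith [sq_nonneg (cross a e)]
    exact hne (SameRay.sameRay_pos_smul_right e hc)
  rcases (mul_ne_zero hcross (right_ne_zero_of_mul hef.ne')).lt_or_gt with h | h
  · refine Or.inr ⟨by linarith [mul_comm (cross a e) (cross a f)], ?_⟩
    rw [cross_swap]
    nlinarith [mul_pos hef (sq_pos_of_ne_zero hcross)]
  · exact Or.inl ⟨hef, h⟩

lemma exists_smul_add_of_not_inCone {a b y : ℝ × ℝ} (hab : cross a b ≠ 0)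
    (hy : ¬ InCone a b y) (ha : ¬ SameRay ℝ a y) (hb : ¬ SameRay ℝ b y) :
    ∃ μ ν : ℝ, (μ < 0 ∨ ν < 0) ∧ y = μ • a + ν • b := by
  have hy_eq := eq_smul_add_smul_of_cross_ne_zero hab y
  refine ⟨_, _, ?_, hy_eq⟩
  by_contra! hnn
  obtain ⟨hμ, hν⟩ := hnn
  rcases hμ.eq_or_lt with hμ | hμ
  · rw [← hμ, zero_smul, zero_add] at hy_eq
    exact hb (hy_eq ▸ SameRay.sameRay_nonneg_smul_right b hν)
  rcases hν.eq_or_lt with hν | hν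
  · rw [← hν, zero_smul, add_zero] at hy_eq
    exact ha (hy_eq ▸ SameRay.sameRay_nonneg_smul_right a hμ.le)
  rw [div_pos_iff, ← mul_pos_iff] at hμ hν
  exact hy ⟨hν, hμ⟩

lemma zero_mem_openSegment_of_cross_eq_zero {p q : ℝ × ℝ} (h : cross p q = 0)
    (hpq : ¬ SameRay ℝ p q) : (0 : ℝ × ℝ) ∈ openSegment ℝ p q := by
  have hp : p ≠ 0 := by rintro rfl; exact hpq (SameRay.zero_left q)
  have hq : q ≠ 0 := by rintro rfl; exact hpq (SameRay.zero_right p)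
  obtain ⟨c, rfl⟩ := exists_eq_smul_of_cross_eq_zero h hp
  have hc : c < 0 := by
    by_contra! hc
    exact hpq (SameRay.sameRay_nonneg_smul_right p hc)
  refine mem_openSegment_of_ne_left_right hp hq ?_
  rw [mem_segment_iff_sameRay, zero_sub, sub_zero, show c • p = (-c) • -p by simp]
  exact SameRay.sameRay_nonneg_smul_right (-p) (by linarith)

/-- As `[u, x]` avoids `[v, w]`, the point `x` lies in the triangle `uvw`, which `[x, y]` cannot
leave without crossing a side. -/
lemma inCone_of_disjoint_segment {u v w x y : ℝ × ℝ}
    (hx : InCone (v - u) (w - u) (x - u))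
    (hvy : ¬ SameRay ℝ (v - u) (y - u)) (hwy : ¬ SameRay ℝ (w - u) (y - u))
    (hux : Disjoint (segment ℝ u x) (segment ℝ v w))
    (hvw : Disjoint (segment ℝ x y) (segment ℝ v w))
    (huw : Disjoint (segment ℝ x y) (segment ℝ u w))
    (huv : Disjoint (segment ℝ x y) (segment ℝ u v)) :
    InCone (v - u) (w - u) (y - u) := by
  by_contra hy
  obtain ⟨α, β, hα, hβ, hxe⟩ := hx.exists_pos_smul_add
  obtain ⟨μ, ν, hμν, hye⟩ := exists_smul_add_of_not_inCone hx.cross_ne_zero hy hvy hwy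
  rw [sub_eq_iff_eq_add] at hxe hye
  rcases lt_or_ge (α + β) 1 with hlt | hge
  · obtain ⟨p, hp, hside⟩ := exists_mem_segment_inter_side (u := u) (v := v) (w := w)
      (a := 1 - α - β) (b := α) (c := β) (a' := 1 - μ - ν) (b' := μ) (c' := ν) (by linarith)
      hα.le hβ.le (by ring) (by ring) (Or.inr (hμν.imp le_of_lt le_of_lt))
    rw [show (1 - α - β) • u + α • v + β • w = x by rw [hxe]; module,
      show (1 - μ - ν) • u + μ • v + ν • w = y by rw [hye]; module] at hp
    rcases hside with h | h | h
    · exact Set.disjoint_left.mp hvw hp h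
    · exact Set.disjoint_left.mp huw hp h
    · exact Set.disjoint_left.mp huv hp h
  · have hsum : 0 < α + β := by linarith
    set t := (α + β)⁻¹
    have ht : t * α + t * β = 1 := by rw [← mul_add, inv_mul_cancel₀ hsum.ne']
    have ht₁ : t ≤ 1 := inv_le_one_of_one_le₀ hge
    have hux' : (t * α) • v + (t * β) • w ∈ segment ℝ u x := by
      refine ⟨1 - t, t, by linarith, by positivity, by ring, ?_⟩
      rw [hxe]
      linear_combination (norm := module) -(ht • u)
    exact Set.disjoint_left.mp hux hux' ⟨t * α, t * β, by positivity, by positivity, ht, rfl⟩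

end Plane

open Plane

namespace IsPlanarSLFrame

variable {V : Type*} {G : SimpleGraph V} {S : Set V} {D : V → ℝ × ℝ}

lemma induce (hP : IsPlanarSLFrame G S D) :
    IsPlanarSLFrame (G.induce S) Set.univ (fun v : S => D v) := by
  obtain ⟨hinj, hvert, hedge⟩ := hP
  refine ⟨fun a _ b _ hab => Subtype.ext (hinj a.2 b.2 hab), ?_, ?_⟩
  · intro u v w huv _ _ _ hwu hwv
    exact hvert u v w huv u.2 v.2 w.2 (Subtype.coe_ne_coe.mpr hwu) (Subtype.coe_ne_coe.mpr hwv)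
  · intro u v x y huv hxy _ _ _ _ hne p hp
    obtain ⟨z, hz₁, hz₂, rfl⟩ := hedge u v x y huv hxy u.2 v.2 x.2 y.2
      (by simpa only [Subtype.ext_iff] using hne) p hp
    rcases hz₁ with rfl | rfl
    · exact ⟨u, Or.inl rfl, by simpa only [Subtype.ext_iff] using hz₂, rfl⟩
    · exact ⟨v, Or.inr rfl, by simpa only [Subtype.ext_iff] using hz₂, rfl⟩

lemma disjoint_segment (hP : IsPlanarSLFrame G Set.univ D) {u v x y : V} (huv : G.Adj u v)
    (hxy : G.Adj x y) (hux : u ≠ x) (huy : u ≠ y) (hvx : v ≠ x) (hvy : v ≠ y) :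
    Disjoint (segment ℝ (D u) (D v)) (segment ℝ (D x) (D y)) := by
  refine Set.disjoint_left.mpr fun p hp hp' => ?_
  obtain ⟨z, hz₁, hz₂, -⟩ := hP.2.2 u v x y huv hxy trivial trivial trivial trivial
    (by rintro (⟨rfl, -⟩ | ⟨rfl, -⟩) <;> contradiction) p ⟨hp, hp'⟩
  rcases hz₁ with rfl | rfl <;> rcases hz₂ with rfl | rfl <;> contradiction

lemma not_sameRay (hP : IsPlanarSLFrame G Set.univ D) {u z z' : V} (hz : G.Adj u z)
    (hz' : G.Adj u z') (hne : z ≠ z') : ¬ SameRay ℝ (D z - D u) (D z' - D u) := by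
  intro h
  have hD {a b : V} (hab : a ≠ b) : D a ≠ D b := hP.1.ne trivial trivial hab
  rcases mem_openSegment_or_of_sameRay h (hD hz.ne') (hD hz'.ne') (hD hne) with h | h
  · exact hP.2.1 u z' z hz' trivial trivial trivial hz.ne' hne h
  · exact hP.2.1 u z z' hz trivial trivial trivial hz'.ne' hne.symm h

lemma cross_ne_zero (hP : IsPlanarSLFrame G Set.univ D) {u n p : V} (hn : G.Adj u n)
    (hp : G.Adj u p) (hnp : G.Adj n p) : cross (D n - D u) (D p - D u) ≠ 0 := by
  intro h
  have h₀ := zero_mem_openSegment_of_cross_eq_zero h (hP.not_sameRay hn hp hnp.ne)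
  have hu : D u ∈ openSegment ℝ (D n) (D p) := by
    simpa using (mem_openSegment_translate ℝ (D u)).mpr h₀
  exact hP.2.1 n p u hnp trivial trivial trivial hn.ne hp.ne hu

lemma inCone_of_adj (hP : IsPlanarSLFrame G Set.univ D) {u x y z w : V} (hx : G.Adj u x)
    (hy : G.Adj u y) (hz : G.Adj u z) (hw : G.Adj u w) (hxy : G.Adj x y) (hzw : G.Adj z w)
    (hwx : w ≠ x) (hwy : w ≠ y) (h : InCone (D x - D u) (D y - D u) (D z - D u)) :
    InCone (D x - D u) (D y - D u) (D w - D u) := by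
  have hzu : z ≠ u := by rintro rfl; exact h.ne_zero (sub_self _)
  have hzx : z ≠ x := by rintro rfl; exact h.ne_left rfl
  have hzy : z ≠ y := by rintro rfl; exact h.ne_right rfl
  exact inCone_of_disjoint_segment h (hP.not_sameRay hx hw hwx.symm)
    (hP.not_sameRay hy hw hwy.symm) (hP.disjoint_segment hz hxy hx.ne hy.ne hzx hzy)
    (hP.disjoint_segment hzw hxy hzx hzy hwx hwy) (hP.disjoint_segment hzw hy hzu hzy hw.ne' hwy)
    (hP.disjoint_segment hzw hx hzu hzx hw.ne' hwx)

end IsPlanarSLFrame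

structure IsApexOverK23 {V : Type*} (G : SimpleGraph V) (u n₁ n₂ : V) (p : Fin 3 → V) :
    Prop where
  adj_n₁ : G.Adj u n₁
  adj_n₂ : G.Adj u n₂
  adj_p : ∀ i, G.Adj u (p i)
  n₁_adj : ∀ i, G.Adj n₁ (p i)
  n₂_adj : ∀ i, G.Adj n₂ (p i)
  n₁_ne_n₂ : n₁ ≠ n₂
  injective : Function.Injective p

namespace IsApexOverK23

variable {V : Type*} {G : SimpleGraph V} {D : V → ℝ × ℝ} {u n₁ n₂ : V} {p : Fin 3 → V}

lemma induce (hK : IsApexOverK23 G u n₁ n₂ p) {S : Set V} (hu : u ∈ S) (hn₁ : n₁ ∈ S)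
    (hn₂ : n₂ ∈ S) (hp : ∀ i, p i ∈ S) :
    IsApexOverK23 (G.induce S) ⟨u, hu⟩ ⟨n₁, hn₁⟩ ⟨n₂, hn₂⟩ fun i => ⟨p i, hp i⟩ :=
  ⟨hK.adj_n₁, hK.adj_n₂, hK.adj_p, hK.n₁_adj, hK.n₂_adj,
    fun h => hK.n₁_ne_n₂ (congrArg Subtype.val h),
    fun _ _ h => hK.injective (congrArg Subtype.val h)⟩

/-- Once `p j` lies inside the angle `∠ n₁ u (p i)`, so do `n₂` (a neighbour of `p j`) and then
`p k` (a neighbour of `n₂`). -/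
lemma inCone_of_inCone (hK : IsApexOverK23 G u n₁ n₂ p) (hP : IsPlanarSLFrame G Set.univ D)
    {i j k : Fin 3} (hik : i ≠ k)
    (h : InCone (D n₁ - D u) (D (p i) - D u) (D (p j) - D u)) :
    InCone (D n₁ - D u) (D (p i) - D u) (D (p k) - D u) := by
  have h₂ := hP.inCone_of_adj hK.adj_n₁ (hK.adj_p i) (hK.adj_p j) hK.adj_n₂
    (hK.n₁_adj i) (hK.n₂_adj j).symm hK.n₁_ne_n₂.symm (hK.n₂_adj i).ne h
  exact hP.inCone_of_adj hK.adj_n₁ (hK.adj_p i) hK.adj_n₂ (hK.adj_p k)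
    (hK.n₁_adj i) (hK.n₂_adj k) (hK.n₁_adj k).ne' (hK.injective.ne hik.symm) h₂

lemma not_inCone (hK : IsApexOverK23 G u n₁ n₂ p) (hP : IsPlanarSLFrame G Set.univ D)
    {i j : Fin 3} (hij : i ≠ j) : ¬ InCone (D n₁ - D u) (D (p i) - D u) (D (p j) - D u) := by
  intro h
  obtain ⟨k, hki, hkj⟩ : ∃ k, k ≠ i ∧ k ≠ j := by
    have : ∀ i j : Fin 3, ∃ k, k ≠ i ∧ k ≠ j := by decide
    exact this i j
  have hk := hK.inCone_of_inCone hP hki.symm h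
  have hjk : 0 < cross (D n₁ - D u) (D (p j) - D u) * cross (D n₁ - D u) (D (p k) - D u) := by
    nlinarith [mul_pos h.1 hk.1, mul_self_nonneg (cross (D n₁ - D u) (D (p i) - D u))]
  rcases inCone_or_inCone_of_mul_pos hjk
      (hP.not_sameRay (hK.adj_p j) (hK.adj_p k) (hK.injective.ne hkj.symm)) with h' | h'
  · exact hk.not_inCone_swap (hK.inCone_of_inCone hP hki h')
  · exact h.not_inCone_swap (hK.inCone_of_inCone hP hij.symm h')

theorem not_isPlanarSLFrame (hK : IsApexOverK23 G u n₁ n₂ p) :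
    ¬ IsPlanarSLFrame G Set.univ D := by
  intro hP
  obtain ⟨i, j, hij, hpos⟩ := exists_ne_mul_pos
    (fun i => hP.cross_ne_zero hK.adj_n₁ (hK.adj_p i) (hK.n₁_adj i)) (by simp)
  rcases inCone_or_inCone_of_mul_pos hpos
      (hP.not_sameRay (hK.adj_p i) (hK.adj_p j) (hK.injective.ne hij)) with h | h
  · exact hK.not_inCone hP hij.symm h
  · exact hK.not_inCone hP hij h

end IsApexOverK23

namespace IsGeomStoryplan

variable {V : Type*} {G : SimpleGraph V} {len : ℕ} {s e : V → ℕ} {D : V → ℝ × ℝ}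

lemma start_le_end (h : IsGeomStoryplan G len s e D) (v : V) : s v ≤ e v := (h.2.1 v).2.1

lemma start_le_end_of_adj (h : IsGeomStoryplan G len s e D) {u v : V} (huv : G.Adj u v) :
    s v ≤ e u := by
  obtain ⟨t, -, hu, hv, -⟩ := h.2.2.1 u v huv
  exact hv.trans hu

lemma isPlanarSLFrame_end (h : IsGeomStoryplan G len s e D) (u : V) :
    IsPlanarSLFrame G {v | s v ≤ e u ∧ e u ≤ e v} D :=
  h.2.2.2 (e u) ((h.2.1 u).1.trans (h.start_le_end u)) (h.2.1 u).2.2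

end IsGeomStoryplan

def cycleVert : Fin 3 → Fin 4 → GVert
  | 0 => .a
  | 1 => .b
  | 2 => .c

lemma cycleVert_adj_q (c : Fin 3) (k i : Fin 4) (j : Fin 2) :
    GraphG.Adj (cycleVert c k) (.q i j) := by
  fin_cases c <;> simp [cycleVert, GraphG, GRel]

lemma cycleVert_adj_succ (c : Fin 3) (k : Fin 4) :
    GraphG.Adj (cycleVert c k) (cycleVert c (k + 1)) := by
  fin_cases c <;> fin_cases k <;> simp [cycleVert, GraphG, GRel]

lemma cycleVert_adj_pred (c : Fin 3) (k : Fin 4) :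
    GraphG.Adj (cycleVert c k) (cycleVert c (k - 1)) := by
  fin_cases c <;> fin_cases k <;> simp [cycleVert, GraphG, GRel]

lemma cyclesVisible_iff {s e : GVert → ℕ} {t : ℕ} :
    CyclesVisible s e t ↔ ∀ c k, Visible s e t (cycleVert c k) := by
  refine ⟨fun h c k => ?_, fun h k => ⟨h 0 k, h 1 k, h 2 k⟩⟩
  fin_cases c
  exacts [(h k).1, (h k).2.1, (h k).2.2]

lemma isApexOverK23_cycleVert (c : Fin 3) (k : Fin 4) :
    IsApexOverK23 GraphG (cycleVert c k) (cycleVert c (k + 1)) (cycleVert c (k - 1))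
      fun i => .q i.castSucc 0 where
  adj_n₁ := cycleVert_adj_succ c k
  adj_n₂ := cycleVert_adj_pred c k
  adj_p _ := cycleVert_adj_q ..
  n₁_adj _ := cycleVert_adj_q ..
  n₂_adj _ := cycleVert_adj_q ..
  n₁_ne_n₂ := by fin_cases c <;> fin_cases k <;> decide
  injective _ _ h := Fin.castSucc_injective _ (GVert.q.inj h).1

theorem all_cycles_cooccur
    (len : ℕ) (s e : GVert → ℕ) (D : GVert → ℝ × ℝ)
    (hSP : IsGeomStoryplan GraphG len s e D) :
    ∃ t, CyclesVisible s e t := by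
  by_contra! hnone
  obtain ⟨⟨c, k⟩, hmin⟩ := Finite.exists_min fun ck : Fin 3 × Fin 4 => e (cycleVert ck.1 ck.2)
  set u := cycleVert c k
  obtain ⟨c', k', hw⟩ : ∃ c' k', ¬ Visible s e (e u) (cycleVert c' k') := by
    simpa [cyclesVisible_iff] using hnone (e u)
  have hsw : e u < s (cycleVert c' k') := by
    have := hmin (c', k')
    simp only [Visible, not_and, not_le] at hw this
    omega
  set S := {v | s v ≤ e u ∧ e u ≤ e v}
  have hK := isApexOverK23_cycleVert c k
  have hp (i : Fin 3) : GVert.q i.castSucc 0 ∈ S :=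
    ⟨hSP.start_le_end_of_adj (hK.adj_p i),
      hsw.le.trans (hSP.start_le_end_of_adj (cycleVert_adj_q c' k' _ _).symm)⟩
  have hK' := hK.induce (S := S) ⟨hSP.start_le_end u, le_rfl⟩
    ⟨hSP.start_le_end_of_adj hK.adj_n₁, hmin (c, k + 1)⟩
    ⟨hSP.start_le_end_of_adj hK.adj_n₂, hmin (c, k - 1)⟩ hp
  exact hK'.not_isPlanarSLFrame (hSP.isPlanarSLFrame_end u).induce
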